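/- arXiv:1802.04419 — 3 statements merged into one kernel-verified Lean document; each statement's English description precedes it below -/
import Mathlib

section
/- Let R be a commutative ring, a, b ∈ R, and let H be a 4×4 matrix over R such that every entry of the second row of H is divisible by a, every entry of the third row is divisible by b, and every entry of the fourth row is divisible by a·b. Then every entry of the adjugate matrix adj(H) is divisible by a·b. -/
namespace Matrix

theorem exists_eq_updateRow_smul_of_dvd_row {m n R : Type*} [DecidableEq m] [Semigroup R]
    {A : Matrix m n R} {r : m} {c : R} (h : ∀ j, c ∣ A r j) :
    ∃ v : n → R, A = A.updateRow r (c • v) := by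
  choose v hv using h
  refine ⟨v, ?_⟩
  ext i j
  by_cases hi : i = r
  · subst hi; simp [hv]
  · simp [updateRow_ne hi]

variable {n R : Type*} [Fintype n] [DecidableEq n] [CommRing R]

theorem dvd_det_of_dvd_row {A : Matrix n n R} {r : n} {c : R} (h : ∀ j, c ∣ A r j) :
    c ∣ A.det := by
  obtain ⟨v, hv⟩ := exists_eq_updateRow_smul_of_dvd_row h
  rw [hv, det_updateRow_smul]
  exact dvd_mul_right c _

theorem mul_dvd_det_of_dvd_rows {A : Matrix n n R} {r s : n} {a b : R} (hrs : r ≠ s)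
    (ha : ∀ j, a ∣ A r j) (hb : ∀ j, b ∣ A s j) : a * b ∣ A.det := by
  obtain ⟨v, hv⟩ := exists_eq_updateRow_smul_of_dvd_row ha
  rw [hv, det_updateRow_smul]
  refine mul_dvd_mul_left a (dvd_det_of_dvd_row (r := s) fun j => ?_)
  rw [updateRow_ne hrs.symm]
  exact hb j

end Matrix

open Matrix in
/-- Divisibility of the adjugate: if the second row of a 4×4 matrix is divisible by `a`,
the third row by `b`, and the fourth row by `a*b`, then every entry of the adjugate
is divisible by `a*b`. -/
theorem adjugate_dvd_of_rows_dvd {R : Type*} [CommRing R] (a b : R)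
    (H : Matrix (Fin 4) (Fin 4) R)
    (h1 : ∀ j, a ∣ H 1 j) (h2 : ∀ j, b ∣ H 2 j) (h3 : ∀ j, a * b ∣ H 3 j) :
    ∀ i j, a * b ∣ H.adjugate i j := by
  intro i j
  -- `adj(H) i j` is the determinant of `H` with only row `j` replaced.
  rw [adjugate_apply]
  by_cases hj : j = 3
  · subst hj
    refine mul_dvd_det_of_dvd_rows (r := 1) (s := 2) (by decide) (fun k => ?_) (fun k => ?_)
    · rw [updateRow_ne (by decide)]; exact h1 k
    · rw [updateRow_ne (by decide)]; exact h2 k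
  · refine dvd_det_of_dvd_row (r := 3) fun k => ?_
    rw [updateRow_ne (Ne.symm hj)]
    exact h3 k
end

section
/- Let K be a field and let M be a 2-dimensional subspace of K⁴ with basis {u, v}. For each i ∈ ℤ/4ℤ, suppose given m⁽ⁱ⁾ ∈ M whose i-th coordinate vanishes, and suppose that for all i the (i+1)-th coordinate of m⁽ⁱ⁾ equals the negative of the i-th coordinate of m⁽ⁱ⁺¹⁾ and that this common value is nonzero. Then, writing m⁽ⁱ⁾ = c_i·(u_i v − v_i u) (which is possible since u_i v − v_i u spans the line { x ∈ M : x_i = 0 }), the scalars c₁, c₂, c₃, c₄ are all equal. -/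
theorem Fin.apply_eq_of_forall_apply_eq_apply_add_one {n : ℕ} {α : Type*} {f : Fin (n + 1) → α}
    (h : ∀ i, f i = f (i + 1)) (i j : Fin (n + 1)) : f i = f j := by
  have h_shift (d : Fin (n + 1)) : f i = f (i + d) := by
    induction d using Fin.induction with
    | zero => simp
    | succ d ih => rw [← Fin.coeSucc_eq_succ, ← add_assoc, ← h]; exact ih
  simpa using h_shift (j - i)

/-- The `j`-th coordinate of `a • (u_i v - v_i u)` is `a` times the minor `u_i v_j - v_i u_j`,
which changes sign under `i ↔ j`. -/
theorem eq_of_smul_wedge_apply_eq_neg {ι K : Type*} [Field K] (u v : ι → K) {a b : K} {i j : ι}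
    (h : (a • (u i • v - v i • u)) j = -(b • (u j • v - v j • u)) i)
    (hne : (a • (u i • v - v i • u)) j ≠ 0) : a = b := by
  simp only [Pi.smul_apply, Pi.sub_apply, smul_eq_mul] at h hne
  exact mul_right_cancel₀ (right_ne_zero_of_mul hne) (by linear_combination h)

theorem scalars_all_equal_general {K : Type*} [Field K]
    (u v : Fin 4 → K)
    (m : Fin 4 → (Fin 4 → K)) (c : Fin 4 → K)
    (hm : ∀ i, m i = c i • (u i • v - v i • u))
    (hanti : ∀ i : Fin 4, m i (i + 1) = - m (i + 1) i)
    (hne : ∀ i : Fin 4, m i (i + 1) ≠ 0) :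
    ∀ i j : Fin 4, c i = c j := by
  refine Fin.apply_eq_of_forall_apply_eq_apply_add_one fun i => ?_
  exact eq_of_smul_wedge_apply_eq_neg u v (by simpa only [hm] using hanti i)
    (by simpa only [hm] using hne i)

/-- Key linear algebra step in the construction of the rank-2 Beilinson–Flach class:
if `m⁽ⁱ⁾ = c_i (u_i v − v_i u)` have vanishing `i`-th coordinate, and the `(i+1)`-th
coordinate of `m⁽ⁱ⁾` is the negative of the `i`-th coordinate of `m⁽ⁱ⁺¹⁾` and nonzero,
then all the scalars `c_i` coincide. -/
theorem scalars_all_equal {K : Type*} [Field K]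
    (u v : Fin 4 → K) (hindep : LinearIndependent K ![u, v])
    (m : Fin 4 → (Fin 4 → K)) (c : Fin 4 → K)
    (hm : ∀ i, m i = c i • (u i • v - v i • u))
    (hzero : ∀ i, m i i = 0)
    (hanti : ∀ i : Fin 4, m i (i + 1) = - m (i + 1) i)
    (hne : ∀ i : Fin 4, m i (i + 1) ≠ 0) :
    ∀ i j : Fin 4, c i = c j :=
  scalars_all_equal_general u v m c hm hanti hne
end

section
/- Let R be a commutative ring, σ : R → R a ring homomorphism extended entrywise to matrices, and I ⊆ R an ideal. Suppose M, A, P are n×n matrices over R with M = A·σ(M)·P^{−1} (P invertible) and M ≡ I_n (mod I). Then for every m ≥ 1, M ≡ A^m · σ^{m−1}(P^{−1}) ⋯ σ(P^{−1}) · P^{−1} (mod σ^m(I)·R), where σ^m(I)·R denotes the ideal generated by σ^m(I), provided σ^m(M) ≡ I_n (mod σ^m(I)·R). -/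
/-!
Iterating `M = A · σ(M) · P⁻¹` and using `σ(A) = A` gives
`M = A^m · σ^m(M) · σ^{m-1}(P⁻¹) ⋯ σ(P⁻¹) · P⁻¹` for every `m`. Subtracting
`A^m · σ^{m-1}(P⁻¹) ⋯ P⁻¹` leaves `A^m · (σ^m(M) - 1) · σ^{m-1}(P⁻¹) ⋯ P⁻¹`, whose entries
lie in any ideal containing the entries of `σ^m(M) - 1`.
-/

def iterateProd {R : Type*} [Monoid R] (φ : R → R) (p : R) (m : ℕ) : R :=
  ((List.range m).map fun i => φ^[m - 1 - i] p).prod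

section Monoid

variable {R F : Type*} [Monoid R] [FunLike F R R] [MonoidHomClass F R R]

theorem iterateProd_succ (φ : F) (p : R) (m : ℕ) :
    iterateProd φ p (m + 1) = φ (iterateProd φ p m) * p := by
  have hshift : φ (iterateProd φ p m) = ((List.range m).map fun i => φ^[m - i] p).prod := by
    rw [iterateProd, map_list_prod, List.map_map]
    refine congrArg List.prod (List.map_congr_left fun i hi => ?_)
    rw [Function.comp_apply, ← Function.iterate_succ_apply' φ]
    exact congrArg (φ^[·] p) (by simp only [List.mem_range] at hi; omega)
  rw [hshift, iterateProd, List.range_succ, List.map_append, List.prod_append]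
  simp

theorem eq_pow_mul_iterate_mul_iterateProd (φ : F) {a x p : R} (ha : φ a = a)
    (hx : x = a * φ x * p) (m : ℕ) : x = a ^ m * φ^[m] x * iterateProd φ p m := by
  induction m with
  | zero => simp [iterateProd]
  | succ k ih =>
    calc x = a * φ (a ^ k * φ^[k] x * iterateProd φ p k) * p := by rw [← ih, ← hx]
      _ = a ^ (k + 1) * φ^[k + 1] x * iterateProd φ p (k + 1) := by
        rw [map_mul, map_mul, map_pow, ha, iterateProd_succ, ← Function.iterate_succ_apply' φ,
          pow_succ']
        simp only [mul_assoc]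

end Monoid

theorem Matrix.map_iterate {α ι κ : Type*} (f : α → α) (X : Matrix ι κ α) (k : ℕ) :
    X.map f^[k] = (fun Y : Matrix ι κ α => Y.map f)^[k] X := by
  induction k with
  | zero => rfl
  | succ k ih => rw [Function.iterate_succ_apply', ← ih, Matrix.map_map, Function.iterate_succ']

theorem Matrix.mul_mul_apply_mem {R ι : Type*} [Ring R] [Fintype ι] (J : Ideal R)
    [J.IsTwoSided] (X N Y : Matrix ι ι R) (hN : ∀ i j, N i j ∈ J) (i j : ι) :
    (X * N * Y) i j ∈ J := by
  have hN' : N ∈ J.toTwoSided.matrix ι := by simpa using hN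
  exact Ideal.mem_toTwoSided.1 <| (TwoSidedIdeal.mem_matrix _ _ _).1
    (TwoSidedIdeal.mul_mem_right _ _ Y (TwoSidedIdeal.mul_mem_left _ X _ hN')) i j

theorem wach_congruence_general {R : Type*} [CommRing R] {n : ℕ}
    (σ : R →+* R) (I : Ideal R)
    (M A Pinv : Matrix (Fin n) (Fin n) R)
    (hA : A.map σ = A)
    (hrel : M = A * M.map σ * Pinv) :
    ∀ m : ℕ, 1 ≤ m →
      (∀ i j, (M.map ((⇑σ)^[m]) - 1) i j ∈ Ideal.span ((⇑σ)^[m] '' I)) →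
      ∀ i j,
        (M - A ^ m *
          ((List.range m).map (fun i => Pinv.map ((⇑σ)^[m - 1 - i]))).prod) i j
          ∈ Ideal.span ((⇑σ)^[m] '' I) := by
  intro m _ hm
  have hprod : ((List.range m).map (fun i => Pinv.map ((⇑σ)^[m - 1 - i]))).prod =
      iterateProd σ.mapMatrix Pinv m := by
    simp only [iterateProd, Matrix.map_iterate]
    rfl
  have hiter := eq_pow_mul_iterate_mul_iterateProd σ.mapMatrix hA hrel m
  have hdiff : M - A ^ m * iterateProd σ.mapMatrix Pinv m =
      A ^ m * (M.map (⇑σ)^[m] - 1) * iterateProd σ.mapMatrix Pinv m := by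
    rw [Matrix.map_iterate, mul_sub, mul_one, sub_mul]
    exact congrArg (· - _) hiter
  rw [hprod, hdiff]
  exact Matrix.mul_mul_apply_mem _ _ _ _ hm

/-- Congruence for the Wach-module change of basis matrix: if `M = A·σ(M)·P⁻¹`,
`σ(A) = A` and `M ≡ 1 (mod I)`, then, provided `σ^m(M) ≡ 1` modulo the ideal generated
by `σ^m(I)`, we have `M ≡ A^m · σ^{m−1}(P⁻¹) ⋯ σ(P⁻¹) · P⁻¹` modulo that ideal. -/
theorem wach_congruence {R : Type*} [CommRing R] {n : ℕ}
    (σ : R →+* R) (I : Ideal R)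
    (M A P Pinv : Matrix (Fin n) (Fin n) R)
    (hP : P * Pinv = 1) (hP' : Pinv * P = 1)
    (hA : A.map σ = A)
    (hrel : M = A * M.map σ * Pinv)
    (hM : ∀ i j, (M - 1) i j ∈ I) :
    ∀ m : ℕ, 1 ≤ m →
      (∀ i j, (M.map ((⇑σ)^[m]) - 1) i j ∈ Ideal.span ((⇑σ)^[m] '' I)) →
      ∀ i j,
        (M - A ^ m *
          ((List.range m).map (fun i => Pinv.map ((⇑σ)^[m - 1 - i]))).prod) i j
          ∈ Ideal.span ((⇑σ)^[m] '' I) :=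
  wach_congruence_general σ I M A Pinv hA hrel
end
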